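/- Conjugation bijection for the density series: as formal power series in q, -∑_{n∈S} ∑_{k≥1} (-1)^k q^{nk + k(k-1)/2}/(q;q)_{k-1} = ∑_{λ: sm(λ)∈S} μ*_P(λ) q^{|λ|}, i.e., the inner double sum is the signed generating function for partitions into distinct parts with smallest part in S. -/

import Mathlib

open Finset PowerSeries
open scoped Classical

/-- The partition Möbius function. -/
noncomputable def muP (l : Multiset ℕ) : ℂ :=
  if l.Nodup then (-1 : ℂ) ^ (Multiset.card l) else 0

/-- Partition Dirichlet convolution `(a*b)(λ) = ∑_{δ|λ} a(δ) b(λ/δ)`. -/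
noncomputable def pconv (a b : Multiset ℕ → ℂ) (l : Multiset ℕ) : ℂ :=
  ∑ d ∈ l.powerset.toFinset, a d * b (l - d)

/-- Smallest part of a partition (`0` for the empty partition). -/
def smPart (l : Multiset ℕ) : ℕ := WithTop.untopD 0 (l.toFinset.min)

/-- Largest part of a partition (`0` for the empty partition). -/
def lgPart (l : Multiset ℕ) : ℕ := WithBot.unbotD 0 (l.toFinset.max)

/-- The formal power series `∑_{λ : P(λ)} f(λ) q^{|λ|}`. -/
noncomputable def psOn (P : Multiset ℕ → Prop) (f : Multiset ℕ → ℂ) :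
    PowerSeries ℂ :=
  PowerSeries.mk fun n => ∑ p : Nat.Partition n, if P p.parts then f p.parts else 0

/-- The finite `q`-Pochhammer symbol `(q;q)_n = ∏_{k=1}^n (1-q^k)`. -/
noncomputable def qPochFin (n : ℕ) : PowerSeries ℂ :=
  ∏ k ∈ Finset.range n, (1 - (PowerSeries.X : PowerSeries ℂ) ^ (k + 1))

/-- `(q;q)_∞ = ∏_{k≥1}(1-q^k)`, defined coefficientwise (the partial
products stabilize in each degree). -/
noncomputable def qPochInf : PowerSeries ℂ :=
  PowerSeries.mk fun n => PowerSeries.coeff n (qPochFin n)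

/-- `(q^{n+1};q)_∞ = ∏_{k≥n+1}(1-q^k)`, defined coefficientwise. -/
noncomputable def qPochInfFrom (n : ℕ) : PowerSeries ℂ :=
  PowerSeries.mk fun m =>
    PowerSeries.coeff m
      (∏ k ∈ Finset.Icc (n + 1) m, (1 - (PowerSeries.X : PowerSeries ℂ) ^ k))

/-- The double series `∑_{n∈S} ∑_{k≥1} (-1)^k q^{nk+k(k-1)/2}/(q;q)_{k-1}`,
defined coefficientwise (the `(n,k)` term has order at least `nk+k(k-1)/2`,
so only finitely many terms contribute in each degree). -/
noncomputable def doubleSer (S : Set ℕ) : PowerSeries ℂ :=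
  PowerSeries.mk fun m => ∑ n ∈ Finset.Icc 1 m, ∑ k ∈ Finset.Icc 1 (m + 1),
    if n ∈ S then
      PowerSeries.coeff m
        ((-1 : ℂ) ^ k •
          (PowerSeries.X ^ (n * k + k * (k - 1) / 2) * (qPochFin (k - 1))⁻¹))
    else 0



noncomputable section AuxGF

/-- A convenience constructor for the power series whose coefficients indicate a subset. -/
def indicatorSeries (α : Type*) [Semiring α] (s : Set ℕ) : PowerSeries α :=
  PowerSeries.mk fun n => if n ∈ s then 1 else 0

theorem coeff_indicator {α : Type*} (s : Set ℕ) [Semiring α] (n : ℕ) :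
    coeff n (indicatorSeries α s) = if n ∈ s then 1 else 0 :=
  coeff_mk _ _

theorem constantCoeff_indicator {α : Type*} (s : Set ℕ) [Semiring α] :
    constantCoeff (indicatorSeries α s) = if 0 ∈ s then 1 else 0 :=
  rfl

theorem num_series' {α : Type*} [Field α] (i : ℕ) :
    (1 - (X : PowerSeries α) ^ (i + 1))⁻¹ = indicatorSeries α {k | i + 1 ∣ k} := by
  rw [PowerSeries.inv_eq_iff_mul_eq_one]
  · ext n
    cases n with
    | zero => simp [mul_sub, zero_pow, constantCoeff_indicator]
    | succ n =>
      simp only [coeff_one, if_false, mul_sub, mul_one, coeff_indicator,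
        LinearMap.map_sub, reduceCtorEq]
      simp_rw [coeff_mul, coeff_X_pow, coeff_indicator, @boole_mul _ _ _ _]
      erw [@sum_ite _ _ _ _ _ (fun _ => Classical.propDecidable _), sum_ite]
      simp_rw [@filter_filter _ _ _ _ _, sum_const_zero, add_zero, sum_const, nsmul_eq_mul, mul_one,
        sub_eq_iff_eq_add, zero_add]
      symm
      split_ifs with h
      · suffices #{a ∈ antidiagonal (n + 1) | i + 1 ∣ a.fst ∧ a.snd = i + 1} = 1 by
          simp only [Set.mem_setOf_eq]; convert congr_arg ((↑) : ℕ → α) this; norm_cast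
        rw [card_eq_one]
        cases' h with p hp
        refine ⟨((i + 1) * (p - 1), i + 1), ?_⟩
        ext ⟨a₁, a₂⟩
        simp only [mem_filter, Prod.mk_inj, HasAntidiagonal.mem_antidiagonal, mem_singleton]
        constructor
        · rintro ⟨a_left, ⟨a, rfl⟩, rfl⟩
          refine ⟨?_, rfl⟩
          rw [Nat.mul_sub_left_distrib, ← hp, ← a_left, mul_one, Nat.add_sub_cancel]
        · rintro ⟨rfl, rfl⟩
          match p with
          | 0 => rw [mul_zero] at hp; cases hp
          | p + 1 => rw [hp]; simp [mul_add]
      · suffices #{a ∈ antidiagonal (n + 1) | i + 1 ∣ a.fst ∧ a.snd = i + 1} = 0 by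
          simp only [Set.mem_setOf_eq]; convert congr_arg ((↑) : ℕ → α) this; norm_cast
        rw [card_eq_zero]
        apply eq_empty_of_forall_notMem
        simp only [Prod.forall, mem_filter, not_and, HasAntidiagonal.mem_antidiagonal]
        rintro _ h₁ h₂ ⟨a, rfl⟩ rfl
        apply h
        simp [← h₂]
  · simp [zero_pow]

-- The main workhorse (from Archive/Wiedijk100Theorems/Partition.lean).
theorem partialGF_prop (α : Type*) [CommSemiring α] (n : ℕ) (s : Finset ℕ) (hs : ∀ i ∈ s, 0 < i)
    (c : ℕ → Set ℕ) (hc : ∀ i, i ∉ s → 0 ∈ c i) :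
    #{p : n.Partition | (∀ j, p.parts.count j ∈ c j) ∧ ∀ j ∈ p.parts, j ∈ s} =
      coeff n (∏ i ∈ s, indicatorSeries α ((· * i) '' c i)) := by
  simp_rw [coeff_prod, coeff_indicator, prod_boole, sum_boole]
  apply congr_arg
  simp only [mem_univ, forall_true_left, not_and, not_forall, exists_prop,
    Set.mem_image, not_exists]
  set φ : (a : Nat.Partition n) →
    a ∈ filter (fun p ↦ (∀ (j : ℕ), Multiset.count j p.parts ∈ c j) ∧ ∀ j ∈ p.parts, j ∈ s) univ →
    ℕ →₀ ℕ := fun p _ => {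
      toFun := fun i => Multiset.count i p.parts • i
      support := Finset.filter (fun i => i ≠ 0) p.parts.toFinset
      mem_support_toFun := fun a => by
        simp only [smul_eq_mul, ne_eq, mul_eq_zero, Multiset.count_eq_zero]
        rw [not_or, not_not]
        simp only [Multiset.mem_toFinset, not_not, mem_filter] }
  refine Finset.card_bij φ ?_ ?_ ?_
  · intro a ha
    simp only [φ, not_forall, not_exists, not_and, exists_prop, mem_filter]
    rw [mem_finsuppAntidiag]
    dsimp only [ne_eq, smul_eq_mul, id_eq, eq_mpr_eq_cast, le_eq_subset, Finsupp.coe_mk]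
    simp only [mem_univ, forall_true_left, not_and, not_forall, exists_prop,
      mem_filter, true_and] at ha
    refine ⟨⟨?_, fun i ↦ ?_⟩, fun i _ ↦ ⟨a.parts.count i, ha.1 i, rfl⟩⟩
    · conv_rhs => simp [← a.parts_sum]
      rw [sum_multiset_count_of_subset _ s]
      · simp only [smul_eq_mul]
      · intro i
        simp only [Multiset.mem_toFinset, not_not, mem_filter]
        apply ha.2
    · simp only [ne_eq, Multiset.mem_toFinset, not_not, mem_filter, and_imp]
      exact fun hi _ ↦ ha.2 i hi
  · intro p₁ hp₁ p₂ hp₂ h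
    apply Nat.Partition.ext
    simp only [true_and, mem_univ, mem_filter] at hp₁ hp₂
    ext i
    simp only [φ, ne_eq, Multiset.mem_toFinset, not_not, smul_eq_mul, Finsupp.mk.injEq] at h
    by_cases hi : i = 0
    · rw [hi]
      rw [Multiset.count_eq_zero_of_notMem]
      · rw [Multiset.count_eq_zero_of_notMem]
        intro a; exact Nat.lt_irrefl 0 (hs 0 (hp₂.2 0 a))
      intro a; exact Nat.lt_irrefl 0 (hs 0 (hp₁.2 0 a))
    · rw [← mul_left_inj' hi]
      rw [funext_iff] at h
      exact h.2 i
  · simp only [φ, mem_filter, mem_finsuppAntidiag, mem_univ, exists_prop, true_and, and_assoc]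
    rintro f ⟨hf, hf₃, hf₄⟩
    have hf' : f ∈ finsuppAntidiag s n := mem_finsuppAntidiag.mpr ⟨hf, hf₃⟩
    simp only [mem_finsuppAntidiag] at hf'
    refine ⟨⟨∑ i ∈ s, Multiset.replicate (f i / i) i, ?_, ?_⟩, ?_, ?_, ?_⟩
    · intro i hi
      simp only [exists_prop, Multiset.mem_sum, mem_map, Function.Embedding.coeFn_mk] at hi
      rcases hi with ⟨t, ht, z⟩
      apply hs
      rwa [Multiset.eq_of_mem_replicate z]
    · simp_rw [Multiset.sum_sum, Multiset.sum_replicate, Nat.nsmul_eq_mul]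
      rw [← hf'.1]
      refine sum_congr rfl fun i hi => Nat.div_mul_cancel ?_
      rcases hf₄ i hi with ⟨w, _, hw₂⟩
      rw [← hw₂]
      exact dvd_mul_left _ _
    · intro i
      simp_rw [Multiset.count_sum', Multiset.count_replicate, sum_ite_eq']
      split_ifs with h
      · rcases hf₄ i h with ⟨w, hw₁, hw₂⟩
        rwa [← hw₂, Nat.mul_div_cancel _ (hs i h)]
      · exact hc _ h
    · intro i hi
      rw [Multiset.mem_sum] at hi
      rcases hi with ⟨j, hj₁, hj₂⟩
      rwa [Multiset.eq_of_mem_replicate hj₂]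
    · ext i
      simp_rw [Multiset.count_sum', Multiset.count_replicate, sum_ite_eq']
      simp only [ne_eq, Multiset.mem_toFinset, not_not, smul_eq_mul, ite_mul,
        zero_mul, Finsupp.coe_mk]
      split_ifs with h
      · apply Nat.div_mul_cancel
        rcases hf₄ i h with ⟨w, _, hw₂⟩
        apply Dvd.intro_left _ hw₂
      · apply symm
        rw [← Finsupp.notMem_support_iff]
        exact notMem_mono hf'.2 h

end AuxGF

noncomputable section Main

/-- Number of partitions of `d` with all parts at most `r`. -/
def Apart (d r : ℕ) : ℕ := #{p : d.Partition | ∀ j ∈ p.parts, j ≤ r}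

lemma qPochFin_inv_eq (r : ℕ) :
    (qPochFin r)⁻¹ = ∏ i ∈ range r, (1 - (X : PowerSeries ℂ) ^ (i + 1))⁻¹ := by
  have hc : constantCoeff (qPochFin r) ≠ 0 := by
    rw [qPochFin]
    rw [map_prod]
    simp [zero_pow]
  rw [PowerSeries.inv_eq_iff_mul_eq_one hc, qPochFin, ← Finset.prod_mul_distrib]
  rw [Finset.prod_eq_one]
  intro i _
  rw [mul_comm]
  exact PowerSeries.mul_inv_cancel _ (by simp [zero_pow])

lemma coeff_qPochFin_inv (d r : ℕ) :
    coeff d ((qPochFin r)⁻¹) = (Apart d r : ℂ) := by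
  rw [qPochFin_inv_eq]
  have h1 : ∀ i ∈ (range r).map ⟨Nat.succ, Nat.succ_injective⟩, 0 < i := by
    simp only [mem_map, Function.Embedding.coeFn_mk]
    rintro i ⟨a, -, rfl⟩; exact Nat.succ_pos a
  have := (partialGF_prop ℂ d ((range r).map ⟨Nat.succ, Nat.succ_injective⟩) h1
    (fun _ => Set.univ) (fun _ _ => trivial)).symm
  rw [Finset.prod_map] at this
  have h2 : ∀ i ∈ range r,
      indicatorSeries ℂ ((· * (⟨Nat.succ, Nat.succ_injective⟩ : ℕ ↪ ℕ) i) '' Set.univ)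
        = (1 - (X : PowerSeries ℂ) ^ (i + 1))⁻¹ := by
    intro i _
    have hset : ((· * (⟨Nat.succ, Nat.succ_injective⟩ : ℕ ↪ ℕ) i) '' Set.univ)
        = {k | i + 1 ∣ k} := by
      ext k
      simp only [Set.mem_image, Set.mem_setOf_eq, Set.mem_univ, true_and,
        Function.Embedding.coeFn_mk]
      constructor
      · rintro ⟨c, rfl⟩; exact Dvd.intro_left c rfl
      · rintro ⟨c, rfl⟩; exact ⟨c, by rw [Nat.succ_eq_add_one]; ring⟩
    rw [hset, num_series']
  rw [Finset.prod_congr rfl h2] at this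
  rw [this, Apart]
  norm_cast
  congr 1
  ext p
  simp only [mem_filter, mem_univ, true_and, mem_map, Function.Embedding.coeFn_mk]
  constructor
  · rintro ⟨-, h⟩ j hj
    obtain ⟨a, ha, rfl⟩ := h j hj
    simp only [mem_range] at ha
    omega
  · intro h
    refine ⟨fun j => trivial, fun j hj => ⟨j - 1, by
      have := p.parts_pos hj
      have := h j hj
      constructor
      · simp only [mem_range]; omega
      · omega⟩⟩

end Main

noncomputable section CntAux

/-- Number of parts of `q` that are `≥ i`. -/
def cnt (q : Multiset ℕ) (i : ℕ) : ℕ := q.countP (fun x => i ≤ x)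

lemma cnt_mono {q : Multiset ℕ} {i i' : ℕ} (h : i ≤ i') : cnt q i' ≤ cnt q i := by
  induction q using Multiset.induction_on with
  | empty => simp [cnt]
  | cons a s ih =>
    simp only [cnt, Multiset.countP_cons] at *
    split_ifs <;> omega

lemma cnt_eq_zero {q : Multiset ℕ} {r i : ℕ} (hq : ∀ x ∈ q, x ≤ r) (h : r < i) :
    cnt q i = 0 := by
  rw [cnt, Multiset.countP_eq_zero]
  intro a ha
  have := hq a ha
  omega

lemma cnt_succ (q : Multiset ℕ) (i : ℕ) : cnt q i = q.count i + cnt q (i + 1) := by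
  induction q using Multiset.induction_on with
  | empty => simp [cnt]
  | cons a s ih =>
    simp only [cnt, Multiset.countP_cons, Multiset.count_cons] at *
    split_ifs <;> omega

lemma cnt_sum {q : Multiset ℕ} {N : ℕ} (hq : ∀ x ∈ q, x ≤ N) :
    ∑ i ∈ Finset.Icc 1 N, cnt q i = q.sum := by
  induction q using Multiset.induction_on with
  | empty => simp [cnt]
  | cons a s ih =>
    have ha : a ≤ N := hq a (Multiset.mem_cons_self _ _)
    have hs : ∀ x ∈ s, x ≤ N := fun x hx => hq x (Multiset.mem_cons_of_mem hx)
    rw [Multiset.sum_cons, ← ih hs]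
    have key : ∀ i, cnt (a ::ₘ s) i = cnt s i + if i ≤ a then 1 else 0 := fun i => by
      simp [cnt, Multiset.countP_cons]
    simp only [key]
    rw [Finset.sum_add_distrib]
    have : ∑ i ∈ Finset.Icc 1 N, (if i ≤ a then 1 else 0) = a := by
      rw [Finset.sum_boole]
      have : Finset.filter (fun i => i ≤ a) (Finset.Icc 1 N) = Finset.Icc 1 a := by
        ext x
        simp only [Finset.mem_filter, Finset.mem_Icc]
        omega
      rw [this, Nat.card_Icc]
      push_cast
      omega
    omega

lemma cnt_ext {q₁ q₂ : Multiset ℕ} (h1 : ∀ x ∈ q₁, 0 < x) (h2 : ∀ x ∈ q₂, 0 < x)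
    (h : ∀ i, 1 ≤ i → cnt q₁ i = cnt q₂ i) : q₁ = q₂ := by
  ext v
  cases v with
  | zero =>
    rw [Multiset.count_eq_zero_of_notMem, Multiset.count_eq_zero_of_notMem]
    · intro hv; exact absurd (h2 0 hv) (by omega)
    · intro hv; exact absurd (h1 0 hv) (by omega)
  | succ v =>
    have e1 := cnt_succ q₁ (v + 1)
    have e2 := cnt_succ q₂ (v + 1)
    have h3 := h (v + 1) (by omega)
    have h4 := h (v + 1 + 1) (by omega)
    omega

lemma cnt_replicate (c a i : ℕ) :
    cnt (Multiset.replicate c a) i = if i ≤ a then c else 0 := by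
  induction c with
  | zero => simp [cnt]
  | succ c ih =>
    rw [Multiset.replicate_succ]
    simp only [cnt, Multiset.countP_cons] at *
    split_ifs at * <;> omega

lemma tele_sum {a : ℕ → ℕ} : ∀ N, (∀ j, j < N → a j ≤ a (j + 1)) →
    a 0 ≤ a N ∧ ∑ j ∈ Finset.range N, (a (j + 1) - a j) = a N - a 0 := by
  intro N
  induction N with
  | zero => simp
  | succ N ih =>
    intro h
    obtain ⟨h1, h2⟩ := ih (fun j hj => h j (by omega))
    rw [Finset.sum_range_succ, h2]
    have := h N (by omega)
    omega

end CntAux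

noncomputable section Bij

/-- The forward map on multisets. -/
def fmap (n k : ℕ) (q : Multiset ℕ) : Multiset ℕ :=
  (Multiset.range k).map (fun j => n + j + cnt q (k - j))

lemma msum_range (f : ℕ → ℕ) (k : ℕ) :
    ((Multiset.range k).map f).sum = ∑ j ∈ Finset.range k, f j := by
  rw [Finset.sum, Finset.range_val]

lemma sum_range_shift (n k : ℕ) :
    ∑ j ∈ Finset.range k, (n + j) = n * k + k * (k - 1) / 2 := by
  rw [Finset.sum_add_distrib, Finset.sum_const, Finset.sum_range_id]
  simp [mul_comm, smul_eq_mul]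

lemma fmap_strict {n k : ℕ} {q : Multiset ℕ} {a b : ℕ} (hab : a < b) (hb : b < k) :
    n + a + cnt q (k - a) < n + b + cnt q (k - b) := by
  have h1 : cnt q (k - a) ≤ cnt q (k - b) := cnt_mono (by omega)
  omega

lemma fmap_sum {n k : ℕ} {q : Multiset ℕ} (hq : ∀ x ∈ q, x ≤ k - 1) :
    (fmap n k q).sum = n * k + k * (k - 1) / 2 + q.sum := by
  rw [fmap, msum_range]
  have : ∀ j ∈ Finset.range k, (n + j + cnt q (k - j)) = (n + j) + cnt q (k - j) :=
    fun j _ => rfl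
  rw [Finset.sum_congr rfl this, Finset.sum_add_distrib, sum_range_shift]
  congr 1
  have hreindex : ∑ j ∈ Finset.range k, cnt q (k - j) = ∑ i ∈ Finset.Icc 1 k, cnt q i := by
    apply Finset.sum_nbij' (fun j => k - j) (fun i => k - i)
    · intro a ha; simp only [Finset.mem_range] at ha; simp only [Finset.mem_Icc]; omega
    · intro a ha; simp only [Finset.mem_Icc] at ha; simp only [Finset.mem_range]; omega
    · intro a ha; simp only [Finset.mem_range] at ha; omega
    · intro a ha; simp only [Finset.mem_Icc] at ha; omega
    · intro a _; rfl
  rw [hreindex]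
  exact cnt_sum (fun x hx => by have := hq x hx; omega)

lemma smPart_eq {l : Multiset ℕ} {n : ℕ} (hmem : n ∈ l) (hle : ∀ x ∈ l, n ≤ x) :
    smPart l = n := by
  have h : l.toFinset.min = (n : WithTop ℕ) := by
    apply le_antisymm
    · exact Finset.min_le (Multiset.mem_toFinset.2 hmem)
    · exact Finset.le_min fun y hy =>
        WithTop.coe_le_coe.2 (hle y (Multiset.mem_toFinset.1 hy))
  rw [smPart, h]
  rfl

instance : IsAntisymm ℕ (· < ·) := ⟨fun _ _ h1 h2 => absurd h2 (lt_asymm h1)⟩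

lemma map_range_injOn {k : ℕ} {f g : ℕ → ℕ}
    (hf : ∀ a b, a < b → b < k → f a < f b) (hg : ∀ a b, a < b → b < k → g a < g b)
    (h : (Multiset.range k).map f = (Multiset.range k).map g) :
    ∀ j, j < k → f j = g j := by
  have hsorted : ∀ (f : ℕ → ℕ), (∀ a b, a < b → b < k → f a < f b) →
      List.Pairwise (· < ·) ((List.range k).map f) := by
    intro f hf
    rw [List.pairwise_map]
    refine (List.pairwise_lt_range (n := k)).imp_of_mem ?_
    intro a b ha hb hab
    exact hf a b hab (List.mem_range.1 hb)
  have hlist : (List.range k).map f = (List.range k).map g := by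
    refine List.Perm.eq_of_pairwise' (hsorted f hf) (hsorted g hg) ?_
    rw [← Multiset.coe_eq_coe, ← Multiset.map_coe, ← Multiset.map_coe, Multiset.coe_range]
    exact h
  intro j hj
  have hjf : j < ((List.range k).map f).length := by simpa using hj
  have hjg : j < ((List.range k).map g).length := by simpa using hj
  have h1 : ((List.range k).map f)[j] = f j := by
    rw [List.getElem_map]; congr 1; exact List.getElem_range _
  have h2 : ((List.range k).map g)[j] = g j := by
    rw [List.getElem_map]; congr 1; exact List.getElem_range _
  rw [← h1, ← h2]
  congr 1

lemma exists_sorted (l : Multiset ℕ) (hnd : l.Nodup) :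
    ∃ g : ℕ → ℕ, (∀ a b, a < b → b < Multiset.card l → g a < g b) ∧
      (Multiset.range (Multiset.card l)).map g = l := by
  set L := l.sort (· ≤ ·) with hL
  have hLl : (L : Multiset ℕ) = l := Multiset.sort_eq l _
  have hlen : L.length = Multiset.card l := Multiset.length_sort _
  have hndL : L.Nodup := by rw [← Multiset.coe_nodup, hLl]; exact hnd
  have hsorted : List.Pairwise (· < ·) L :=
    ((Multiset.pairwise_sort l _).and hndL).imp fun h => lt_of_le_of_ne h.1 h.2
  refine ⟨fun j => L.getD j 0, ?_, ?_⟩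
  · intro a b hab hb
    show L.getD a 0 < L.getD b 0
    rw [List.getD_eq_getElem _ _ (by omega), List.getD_eq_getElem _ _ (by omega)]
    exact List.pairwise_iff_get.1 hsorted ⟨a, by omega⟩ ⟨b, by omega⟩ hab
  · have hthis : (List.range (Multiset.card l)).map (fun j => L.getD j 0) = L := by
      apply List.ext_getElem
      · simp [hlen]
      · intro i h1 h2
        simp only [List.getElem_map, List.getElem_range]
        exact List.getD_eq_getElem _ _ _
    calc Multiset.map (fun j => L.getD j 0) (Multiset.range (Multiset.card l))
        = ((List.range (Multiset.card l)).map (fun j => L.getD j 0) : Multiset ℕ) := by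
          rw [← Multiset.coe_range, Multiset.map_coe]
      _ = (L : Multiset ℕ) := by rw [hthis]
      _ = l := hLl

/-- Any distinct partition with card `k` and smallest part `n` has an enumeration `g`. -/
lemma tgt_struct {m n k : ℕ} (hk : 1 ≤ k) (p : m.Partition) (hnd : p.parts.Nodup)
    (hsm : smPart p.parts = n) (hcard : Multiset.card p.parts = k) :
    ∃ g : ℕ → ℕ, (∀ a b, a < b → b < k → g a < g b) ∧
      (Multiset.range k).map g = p.parts ∧ g 0 = n ∧
      (∀ j, j < k → n + j ≤ g j) ∧ m = ∑ j ∈ Finset.range k, g j := by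
  obtain ⟨g, hmono, hmap⟩ := exists_sorted p.parts hnd
  rw [hcard] at hmono hmap
  have hg0mem : g 0 ∈ p.parts := by
    rw [← hmap]; exact Multiset.mem_map.2 ⟨0, Multiset.mem_range.2 hk, rfl⟩
  have hg0le : ∀ x ∈ p.parts, g 0 ≤ x := by
    intro x hx
    rw [← hmap] at hx
    obtain ⟨j, hj, rfl⟩ := Multiset.mem_map.1 hx
    rcases Nat.eq_zero_or_pos j with h | h
    · rw [h]
    · exact le_of_lt (hmono 0 j h (Multiset.mem_range.1 hj))
  have hg0 : g 0 = n := by rw [← hsm]; exact (smPart_eq hg0mem hg0le).symm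
  have hgej : ∀ j, j < k → n + j ≤ g j := by
    intro j
    induction j with
    | zero => intro _; omega
    | succ j ih =>
      intro hj
      have := hmono j (j + 1) (by omega) hj
      have := ih (by omega)
      omega
  refine ⟨g, hmono, hmap, hg0, hgej, ?_⟩
  rw [← p.parts_sum, ← hmap, msum_range]

lemma tgt_card_zero {m n k : ℕ} (hk : 1 ≤ k) (hm : m < n * k + k * (k - 1) / 2) :
    #{p : m.Partition | p.parts.Nodup ∧ smPart p.parts = n ∧ Multiset.card p.parts = k}
      = 0 := by
  rw [Finset.card_eq_zero]
  apply Finset.eq_empty_of_forall_notMem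
  intro p hp
  simp only [Finset.mem_filter, Finset.mem_univ, true_and] at hp
  obtain ⟨hnd, hsm, hcard⟩ := hp
  obtain ⟨g, hmono, hmap, hg0, hgej, hsum⟩ := tgt_struct hk p hnd hsm hcard
  have : ∑ j ∈ Finset.range k, (n + j) ≤ ∑ j ∈ Finset.range k, g j :=
    Finset.sum_le_sum fun j hj => hgej j (Finset.mem_range.1 hj)
  rw [sum_range_shift] at this
  omega

lemma cnt_finsum {s : Finset ℕ} {F : ℕ → Multiset ℕ} {t : ℕ} :
    cnt (∑ i ∈ s, F i) t = ∑ i ∈ s, cnt (F i) t := by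
  induction s using Finset.cons_induction with
  | empty => simp [cnt]
  | cons a s ha ih =>
    rw [Finset.sum_cons, Finset.sum_cons, ← ih, cnt, Multiset.countP_add]
    rfl

end Bij

noncomputable section MainBij

lemma cnt_k_eq_zero {k : ℕ} {q : Multiset ℕ} (hq : ∀ x ∈ q, x ≤ k - 1) (hk : 1 ≤ k) :
    cnt q k = 0 := cnt_eq_zero hq (by omega)

lemma fmap_pos {n k : ℕ} (hn : 1 ≤ n) (q : Multiset ℕ) : ∀ x ∈ fmap n k q, 0 < x := by
  intro x hx
  obtain ⟨j, _, rfl⟩ := Multiset.mem_map.1 hx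
  omega

lemma fmap_card {n k : ℕ} (q : Multiset ℕ) : Multiset.card (fmap n k q) = k := by
  simp [fmap]

lemma fmap_nodup {n k : ℕ} (q : Multiset ℕ) : (fmap n k q).Nodup := by
  rw [fmap]
  apply Multiset.Nodup.map_on ?_ (Multiset.nodup_range k)
  intro x hx y hy hxy
  rw [Multiset.mem_range] at hx hy
  by_contra hne
  rcases Nat.lt_or_ge x y with h | h
  · exact absurd hxy (Nat.ne_of_lt (fmap_strict h hy))
  · have h' : y < x := by omega
    exact absurd hxy.symm (Nat.ne_of_lt (fmap_strict h' hx))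

lemma fmap_sm {n k : ℕ} {q : Multiset ℕ} (hk : 1 ≤ k) (hq : ∀ x ∈ q, x ≤ k - 1) :
    smPart (fmap n k q) = n := by
  apply smPart_eq
  · rw [fmap]
    refine Multiset.mem_map.2 ⟨0, Multiset.mem_range.2 hk, ?_⟩
    have h0 : k - 0 = k := by omega
    rw [h0, cnt_k_eq_zero hq hk]
    omega
  · intro x hx
    obtain ⟨j, _, rfl⟩ := Multiset.mem_map.1 hx
    omega

lemma tgt_card_eq {m n k : ℕ} (hn : 1 ≤ n) (hk : 1 ≤ k)
    (he : n * k + k * (k - 1) / 2 ≤ m) :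
    Apart (m - (n * k + k * (k - 1) / 2)) (k - 1) =
      #{p : m.Partition | p.parts.Nodup ∧ smPart p.parts = n ∧
        Multiset.card p.parts = k} := by
  rw [Apart]
  have hconv : ∀ p : (m - (n * k + k * (k - 1) / 2)).Partition,
      (∀ j ∈ p.parts, j ≤ k - 1) → (fmap n k p.parts).sum = m := by
    intro p hp
    rw [fmap_sum hp, p.parts_sum]
    omega
  refine Finset.card_bij (fun p hp => ⟨fmap n k p.parts, fun {i} hi => fmap_pos hn p.parts i hi,
      hconv p (by simpa using hp)⟩) ?_ ?_ ?_
  · intro p hp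
    simp only [Finset.mem_filter, Finset.mem_univ, true_and] at hp ⊢
    exact ⟨fmap_nodup _, fmap_sm hk hp, fmap_card _⟩
  · intro p₁ h₁ p₂ h₂ heq
    simp only [Finset.mem_filter, Finset.mem_univ, true_and] at h₁ h₂
    have heqp : fmap n k p₁.parts = fmap n k p₂.parts := congrArg Nat.Partition.parts heq
    rw [fmap, fmap] at heqp
    have hj := map_range_injOn (fun a b hab hb => fmap_strict hab hb)
      (fun a b hab hb => fmap_strict hab hb) heqp
    have hcnt : ∀ i, 1 ≤ i → cnt p₁.parts i = cnt p₂.parts i := by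
      intro i hi
      rcases le_or_gt i k with h | h
      · have hki : k - i < k := by omega
        have := hj (k - i) hki
        have hkk : k - (k - i) = i := by omega
        rw [hkk] at this
        omega
      · rw [cnt_eq_zero h₁ (by omega), cnt_eq_zero h₂ (by omega)]
    exact Nat.Partition.ext (cnt_ext (fun x hx => p₁.parts_pos hx)
      (fun x hx => p₂.parts_pos hx) hcnt)
  · intro b hb
    simp only [Finset.mem_filter, Finset.mem_univ, true_and] at hb
    obtain ⟨hnd, hsm, hcard⟩ := hb
    obtain ⟨g, hmono, hmap, hg0, hgej, hsum⟩ := tgt_struct hk b hnd hsm hcard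
    classical
    set μ : ℕ → ℕ := fun j => g j - (n + j) with hμ
    set q : Multiset ℕ :=
      ∑ i ∈ Finset.Icc 1 (k - 1), Multiset.replicate (μ (k - i) - μ (k - i - 1)) i with hqdef
    have hqmem : ∀ x ∈ q, 1 ≤ x ∧ x ≤ k - 1 := by
      intro x hx
      rw [hqdef] at hx
      obtain ⟨i, hi, hxi⟩ := Multiset.mem_sum.1 hx
      rw [Multiset.eq_of_mem_replicate hxi]
      exact Finset.mem_Icc.1 hi
    have hμ0 : μ 0 = 0 := by simp only [hμ]; omega
    have hμmono : ∀ j, j + 1 < k → μ j ≤ μ (j + 1) := by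
      intro j hjk
      have h1 := hmono j (j + 1) (by omega) hjk
      have h2 := hgej j (by omega)
      simp only [hμ]
      omega
    have hC1 : ∀ t, 1 ≤ t → t ≤ k → cnt q t = μ (k - t) := by
      intro t h1t htk
      rw [hqdef, cnt_finsum]
      have hterm : ∀ i ∈ Finset.Icc 1 (k - 1),
          cnt (Multiset.replicate (μ (k - i) - μ (k - i - 1)) i) t =
            if t ≤ i then μ (k - i) - μ (k - i - 1) else 0 :=
        fun i _ => cnt_replicate _ _ _
      rw [Finset.sum_congr rfl hterm, ← Finset.sum_filter]
      have hfilt : Finset.filter (fun i => t ≤ i) (Finset.Icc 1 (k - 1)) =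
          Finset.Icc t (k - 1) := by
        ext x
        simp only [Finset.mem_filter, Finset.mem_Icc]
        omega
      rw [hfilt]
      have hre : ∑ i ∈ Finset.Icc t (k - 1), (μ (k - i) - μ (k - i - 1)) =
          ∑ j ∈ Finset.range (k - t), (μ (j + 1) - μ j) := by
        apply Finset.sum_nbij' (fun i => k - 1 - i) (fun j => k - 1 - j)
        · intro a ha; simp only [Finset.mem_Icc] at ha; simp only [Finset.mem_range]; omega
        · intro a ha; simp only [Finset.mem_range] at ha; simp only [Finset.mem_Icc]; omega
        · intro a ha; simp only [Finset.mem_Icc] at ha; omega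
        · intro a ha; simp only [Finset.mem_range] at ha; omega
        · intro a ha
          simp only [Finset.mem_Icc] at ha
          have e1 : k - 1 - a + 1 = k - a := by omega
          have e2 : k - 1 - a = k - a - 1 := by omega
          rw [e1, e2]
      rw [hre, (tele_sum (k - t) (fun j hj => hμmono j (by omega))).2, hμ0]
      omega
    have hfmapq : fmap n k q = b.parts := by
      rw [fmap, ← hmap]
      apply Multiset.map_congr rfl
      intro j hj
      rw [Multiset.mem_range] at hj
      rw [hC1 (k - j) (by omega) (by omega)]
      have hkk : k - (k - j) = j := by omega
      rw [hkk]
      have := hgej j hj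
      simp only [hμ]
      omega
    have hqsum : q.sum = m - (n * k + k * (k - 1) / 2) := by
      have hfs := fmap_sum (n := n) (k := k) (q := q) (fun x hx => (hqmem x hx).2)
      rw [hfmapq, b.parts_sum] at hfs
      omega
    refine ⟨⟨q, fun {i} hi => (hqmem i hi).1, hqsum⟩, ?_, ?_⟩
    · simp only [Finset.mem_filter, Finset.mem_univ, true_and]
      exact fun j hj => (hqmem j hj).2
    · exact Nat.Partition.ext hfmapq

end MainBij
noncomputable section Assembly

lemma card_le_sum_of_pos {l : Multiset ℕ} (h : ∀ x ∈ l, 0 < x) :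
    Multiset.card l ≤ l.sum := by
  induction l using Multiset.induction_on with
  | empty => simp
  | cons a s ih =>
    simp only [Multiset.card_cons, Multiset.sum_cons]
    have ha := h a (Multiset.mem_cons_self a s)
    have := ih (fun x hx => h x (Multiset.mem_cons_of_mem hx))
    omega

lemma smPart_mem {l : Multiset ℕ} (h : l ≠ 0) : smPart l ∈ l := by
  have hne : l.toFinset.Nonempty := Multiset.toFinset_nonempty.2 h
  have heq : smPart l = l.toFinset.min' hne := by
    rw [smPart, ← Finset.coe_min' hne, WithTop.untopD_coe]
  rw [heq]
  exact Multiset.mem_toFinset.1 (Finset.min'_mem _ hne)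

/-- Conjugation bijection for the density series:
`-∑_{n∈S}∑_{k≥1} (-1)^k q^{nk+k(k-1)/2}/(q;q)_{k-1} = ∑_{sm(λ)∈S} μ*_P(λ) q^{|λ|}`. -/
theorem conjugation_density_series (S : Set ℕ) (hS : 0 ∉ S) :
    -doubleSer S = psOn (fun l => smPart l ∈ S) (fun l => -muP l) := by
  ext m
  rw [map_neg, doubleSer, psOn, coeff_mk, coeff_mk]
  have hrhs : ∀ p : Nat.Partition m,
      (if smPart p.parts ∈ S then -muP p.parts else 0)
        = -(if p.parts.Nodup ∧ smPart p.parts ∈ S then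
            (-1 : ℂ) ^ (Multiset.card p.parts) else 0) := by
    intro p
    by_cases h1 : p.parts.Nodup <;> by_cases h2 : smPart p.parts ∈ S <;>
      simp [muP, h1, h2]
  rw [Finset.sum_congr rfl (fun p _ => hrhs p), Finset.sum_neg_distrib, neg_inj]
  have key : ∀ n ∈ Finset.Icc 1 m, ∀ k ∈ Finset.Icc 1 (m + 1),
      (if n ∈ S then coeff m
          ((-1 : ℂ) ^ k • ((X : PowerSeries ℂ) ^ (n * k + k * (k - 1) / 2) *
            (qPochFin (k - 1))⁻¹)) else 0)
      = ∑ p : Nat.Partition m, (if p.parts.Nodup ∧ smPart p.parts = n ∧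
          Multiset.card p.parts = k ∧ n ∈ S then (-1 : ℂ) ^ k else 0) := by
    intro n hn k hk
    rw [Finset.mem_Icc] at hn hk
    by_cases hnS : n ∈ S
    · rw [if_pos hnS]
      have hfilter : ∑ p : Nat.Partition m, (if p.parts.Nodup ∧ smPart p.parts = n ∧
            Multiset.card p.parts = k ∧ n ∈ S then (-1 : ℂ) ^ k else 0)
          = (#{p : m.Partition | p.parts.Nodup ∧ smPart p.parts = n ∧
              Multiset.card p.parts = k} : ℂ) * (-1 : ℂ) ^ k := by
        rw [← Finset.sum_filter, Finset.sum_const, nsmul_eq_mul]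
        congr 2
        apply congrArg
        apply Finset.filter_congr
        intro p _
        simp [hnS]
      rw [hfilter, map_smul, smul_eq_mul, mul_comm ((X : PowerSeries ℂ) ^ _) _,
        PowerSeries.coeff_mul_X_pow']
      rcases le_or_gt (n * k + k * (k - 1) / 2) m with he | he
      · rw [if_pos he, coeff_qPochFin_inv, tgt_card_eq hn.1 hk.1 he]
        ring
      · rw [if_neg (by omega), tgt_card_zero hk.1 he]
        simp
    · rw [if_neg hnS]
      symm
      apply Finset.sum_eq_zero
      intro p _
      rw [if_neg]
      rintro ⟨-, -, -, h⟩
      exact hnS h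
  rw [Finset.sum_congr rfl (fun n hn => Finset.sum_congr rfl (fun k hk => key n hn k hk))]
  rw [Finset.sum_congr rfl (fun n _ => Finset.sum_comm), Finset.sum_comm]
  apply Finset.sum_congr rfl
  intro p _
  by_cases hc : p.parts.Nodup ∧ smPart p.parts ∈ S
  · rw [if_pos hc]
    have hsm0 : smPart (0 : Multiset ℕ) = 0 := by simp [smPart]
    have hne : p.parts ≠ 0 := by
      intro h0
      apply hS
      have := hc.2
      rw [h0, hsm0] at this
      exact this
    have hmem := smPart_mem hne
    have hsm_le : smPart p.parts ≤ m := by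
      conv_rhs => rw [← p.parts_sum]
      exact Multiset.single_le_sum (fun _ _ => Nat.zero_le _) _ hmem
    have hsm_pos : 1 ≤ smPart p.parts := by
      rcases Nat.eq_zero_or_pos (smPart p.parts) with h | h
      · exact absurd (h ▸ hc.2) hS
      · exact h
    have hcard_le : Multiset.card p.parts ≤ m := by
      conv_rhs => rw [← p.parts_sum]
      exact card_le_sum_of_pos (fun x hx => p.parts_pos hx)
    have hcard_pos : 1 ≤ Multiset.card p.parts := by
      have : p.parts ≠ 0 := hne
      have := Multiset.card_pos.2 this
      omega
    rw [Finset.sum_eq_single_of_mem (smPart p.parts)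
      (Finset.mem_Icc.2 ⟨hsm_pos, hsm_le⟩)]
    · rw [Finset.sum_eq_single_of_mem (Multiset.card p.parts)
        (Finset.mem_Icc.2 ⟨hcard_pos, by omega⟩)]
      · rw [if_pos ⟨hc.1, rfl, rfl, hc.2⟩]
      · intro k _ hkne
        rw [if_neg]
        rintro ⟨-, -, h, -⟩
        exact hkne h.symm
    · intro n _ hnne
      apply Finset.sum_eq_zero
      intro k _
      rw [if_neg]
      rintro ⟨-, h, -, -⟩
      exact hnne h.symm
  · rw [if_neg hc]
    apply Finset.sum_eq_zero
    intro n _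
    apply Finset.sum_eq_zero
    intro k _
    rw [if_neg]
    rintro ⟨h1, h2, -, h4⟩
    exact hc ⟨h1, h2 ▸ h4⟩

end Assembly
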